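/- arXiv:math/9801104 — 9 statements merged into one kernel-verified Lean document; each statement's English description precedes it below -/
import Mathlib

section
/- For every real number q > 1 and every integer j ≥ 1, the sum ∑_{l=1}^{j} [2l+1]/({l}^2 {l+1}^2) equals ([2j]/([2]·{j}^2·{j+1}^2))·(1 + [2j+2]/[2]). (This is the summation formula, provable by induction on j, by which the recursion solution for the reduced matrix elements is matched with its closed form.) -/
/-- The q-number `[a] = (q^a - q^(-a)) / (q - q⁻¹)`. -/
noncomputable def qnum (q : ℝ) (a : ℤ) : ℝ := (q ^ a - q ^ (-a)) / (q - q⁻¹)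

/-- The q-bracket `{a} = q^a + q^(-a)`. -/
noncomputable def qbr (q : ℝ) (a : ℤ) : ℝ := q ^ a + q ^ (-a)

section aux
variable (q : ℝ) (hq : 1 < q)

lemma qbr_ne (hq : 1 < q) (a : ℤ) : qbr q a ≠ 0 := by
  have hq0 : (0:ℝ) < q := lt_trans one_pos hq
  have : 0 < qbr q a := by
    unfold qbr; positivity
  exact ne_of_gt this

lemma lam_ne (hq : 1 < q) : q - q⁻¹ ≠ 0 := by
  have : q⁻¹ < 1 := inv_lt_one_of_one_lt₀ hq
  nlinarith

lemma I1 (hq : 1 < q) (l : ℤ) :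
    qbr q (l+1) ^ 2 - qbr q l ^ 2 = (q - q⁻¹) * (q ^ (2*l+1) - q ^ (-(2*l+1))) := by
  have hq0 : (0:ℝ) < q := lt_trans one_pos hq
  have hqne : q ≠ 0 := ne_of_gt hq0
  set x := q ^ l with hx
  have hxne : x ≠ 0 := ne_of_gt (zpow_pos hq0 l)
  have e3 : q ^ (-l) = x⁻¹ := by rw [zpow_neg]
  have e4 : q ^ (l+1) = x * q := by rw [zpow_add₀ hqne, zpow_one]
  have e5 : q ^ (-(l+1)) = (x*q)⁻¹ := by rw [zpow_neg, e4]
  have e10 : q ^ (2*l+1) = x^2*q := by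
    rw [zpow_add₀ hqne, two_mul, zpow_add₀ hqne, zpow_one]; ring
  have e11 : q ^ (-(2*l+1)) = (x^2*q)⁻¹ := by rw [zpow_neg, e10]
  simp only [qbr, e3, e4, e5, e10, e11]
  field_simp
  ring

lemma I2 (hq : 1 < q) (j : ℤ) :
    (qbr q (j+1) ^ 2 - qbr q 1 ^ 2) * qbr q j ^ 2
      = (q ^ (2*j) - q ^ (-(2*j))) *
          (qbr q 1 * (q - q⁻¹) + (q ^ (2*j+2) - q ^ (-(2*j+2)))) := by
  have hq0 : (0:ℝ) < q := lt_trans one_pos hq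
  have hqne : q ≠ 0 := ne_of_gt hq0
  set x := q ^ j with hx
  have hxne : x ≠ 0 := ne_of_gt (zpow_pos hq0 j)
  have e3 : q ^ (-j) = x⁻¹ := by rw [zpow_neg]
  have e4 : q ^ (j+1) = x * q := by rw [zpow_add₀ hqne, zpow_one]
  have e5 : q ^ (-(j+1)) = (x*q)⁻¹ := by rw [zpow_neg, e4]
  have e1 : q ^ (2*j) = x^2 := by rw [two_mul, zpow_add₀ hqne]; ring
  have e2 : q ^ (-(2*j)) = (x^2)⁻¹ := by rw [zpow_neg, e1]
  have e14 : q ^ (2:ℤ) = q^2 := by norm_cast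
  have e6 : q ^ (2*j+2) = x^2 * q^2 := by rw [zpow_add₀ hqne, e1, e14]
  have e7 : q ^ (-(2*j+2)) = (x^2 * q^2)⁻¹ := by rw [zpow_neg, e6]
  simp only [qbr, e1, e2, e3, e4, e5, e6, e7, zpow_one, zpow_neg]
  field_simp
  ring

lemma I3 (hq : 1 < q) : qnum q 2 = qbr q 1 := by
  have hq0 : (0:ℝ) < q := lt_trans one_pos hq
  have hqne : q ≠ 0 := ne_of_gt hq0
  have hlam := lam_ne q hq
  have e14 : q ^ (2:ℤ) = q^2 := by norm_cast
  have e15 : q ^ (-2:ℤ) = (q^2)⁻¹ := by rw [zpow_neg, e14]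
  simp only [qnum, qbr, e14, e15, zpow_one, zpow_neg]
  rw [div_eq_iff hlam]
  field_simp
  ring

lemma tele (hq : 1 < q) (l : ℤ) :
    qnum q (2 * l + 1) / (qbr q l ^ 2 * qbr q (l + 1) ^ 2) =
      ((q - q⁻¹)^2)⁻¹ * ((qbr q l ^ 2)⁻¹ - (qbr q (l+1) ^ 2)⁻¹) := by
  have hB := qbr_ne q hq l
  have hC := qbr_ne q hq (l+1)
  have hlam := lam_ne q hq
  have h1 := I1 q hq l
  rw [qnum]
  set D := q ^ (2*l+1) - q ^ (-(2*l+1)) with hD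
  set B := qbr q l with hBdef
  set C := qbr q (l+1) with hCdef
  set lam := q - q⁻¹ with hlamdef
  clear_value D B C lam
  field_simp
  linear_combination -h1
end aux

theorem sum_formula (q : ℝ) (hq : 1 < q) (j : ℤ) (hj : 1 ≤ j) :
    ∑ l ∈ Finset.Icc (1 : ℤ) j,
        qnum q (2 * l + 1) / (qbr q l ^ 2 * qbr q (l + 1) ^ 2) =
      qnum q (2 * j) / (qnum q 2 * qbr q j ^ 2 * qbr q (j + 1) ^ 2) *
        (1 + qnum q (2 * j + 2) / qnum q 2) := by
  have hq0 : (0:ℝ) < q := lt_trans one_pos hq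
  have hqne : q ≠ 0 := ne_of_gt hq0
  have hlam := lam_ne q hq
  -- telescoped form of the sum
  have hsum : ∀ n : ℤ, 1 ≤ n → ∑ l ∈ Finset.Icc (1 : ℤ) n,
      qnum q (2 * l + 1) / (qbr q l ^ 2 * qbr q (l + 1) ^ 2) =
      ((q - q⁻¹)^2)⁻¹ * ((qbr q 1 ^ 2)⁻¹ - (qbr q (n+1) ^ 2)⁻¹) := by
    intro n hn
    refine Int.le_induction (motive := fun n _ =>
        ∑ l ∈ Finset.Icc (1 : ℤ) n,
          qnum q (2 * l + 1) / (qbr q l ^ 2 * qbr q (l + 1) ^ 2) =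
        ((q - q⁻¹)^2)⁻¹ * ((qbr q 1 ^ 2)⁻¹ - (qbr q (n+1) ^ 2)⁻¹)) ?_ ?_ n hn
    · simp only [Finset.Icc_self, Finset.sum_singleton]
      exact tele q hq 1
    · intro n hn ih
      have hins : Finset.Icc (1:ℤ) (n+1) = insert (n+1) (Finset.Icc 1 n) := by
        ext k; simp only [Finset.mem_Icc, Finset.mem_insert]; omega
      rw [hins, Finset.sum_insert (by simp), ih, tele q hq (n+1)]
      ring
  rw [hsum j hj]
  -- now prove the closed forms agree
  have hN := qbr_ne q hq 1
  have hB := qbr_ne q hq j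
  have hC := qbr_ne q hq (j+1)
  have h2 := I2 q hq j
  have h3 := I3 q hq
  rw [show qnum q (2*j) = (q ^ (2*j) - q ^ (-(2*j)))/(q - q⁻¹) from rfl,
    show qnum q (2*j+2) = (q ^ (2*j+2) - q ^ (-(2*j+2)))/(q - q⁻¹) from rfl, h3]
  set a := q ^ (2*j) - q ^ (-(2*j)) with ha
  set b := q ^ (2*j+2) - q ^ (-(2*j+2)) with hb
  set N := qbr q 1 with hNdef
  set B := qbr q j with hBdef
  set C := qbr q (j+1) with hCdef
  set lam := q - q⁻¹ with hlamdef
  clear_value a b N B C lam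
  field_simp
  linear_combination h2
end

section
/- Let q > 1 and s > 0 be real, and for n ≥ 0 put t_n = (s/[2])·{n+1}. Then for every integer n ≥ 0 one has t_n^2 − (2/[2])^2 s^2 = (s λ [n+1]/[2])^2 ≥ 0, and the two solutions t = ([2]/2)·t_n ± (λ/2)·√(t_n^2 − (2/[2])^2 s^2) of the spectral condition are exactly t = (s/[2])·{n+2} = t_{n+1} (plus sign) and t = (s/[2])·{n} (minus sign), the latter being t_{n−1} when n ≥ 1. (The quadratic spectral condition generates the whole time-like lattice t_n = (s/[2]){n+1} from the point t_0 = s, r_0 = 0.) -/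
theorem timelike_lattice_recursion (q s : ℝ) (hq : 1 < q) (hs : 0 < s) (n : ℤ) (hn : 0 ≤ n) :
    (s / qnum q 2 * qbr q (n + 1)) ^ 2 - (2 / qnum q 2) ^ 2 * s ^ 2 =
        (s * (q - q⁻¹) * qnum q (n + 1) / qnum q 2) ^ 2 ∧
      0 ≤ (s / qnum q 2 * qbr q (n + 1)) ^ 2 - (2 / qnum q 2) ^ 2 * s ^ 2 ∧
      qnum q 2 / 2 * (s / qnum q 2 * qbr q (n + 1)) +
          (q - q⁻¹) / 2 *
            Real.sqrt ((s / qnum q 2 * qbr q (n + 1)) ^ 2 - (2 / qnum q 2) ^ 2 * s ^ 2) =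
        s / qnum q 2 * qbr q (n + 2) ∧
      qnum q 2 / 2 * (s / qnum q 2 * qbr q (n + 1)) -
          (q - q⁻¹) / 2 *
            Real.sqrt ((s / qnum q 2 * qbr q (n + 1)) ^ 2 - (2 / qnum q 2) ^ 2 * s ^ 2) =
        s / qnum q 2 * qbr q n := by
  have hq0 : (0:ℝ) < q := by linarith
  have hne : q ≠ 0 := ne_of_gt hq0
  have hinvpos : 0 < q⁻¹ := inv_pos.mpr hq0
  have hinv : q⁻¹ < 1 := (inv_lt_one₀ hq0).mpr hq
  have hlam : 0 < q - q⁻¹ := by linarith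
  have hlamne : q - q⁻¹ ≠ 0 := ne_of_gt hlam
  have hsumne : q + q⁻¹ ≠ 0 := by positivity
  -- the powers
  have hxpos : 0 < q ^ (n + 1) := zpow_pos hq0 _
  have hxne : q ^ (n + 1) ≠ 0 := ne_of_gt hxpos
  have hx1 : (1:ℝ) ≤ q ^ (n + 1) := by
    rw [show n + 1 = ((n + 1).toNat : ℤ) by omega, zpow_natCast]
    exact one_le_pow₀ hq.le
  set x : ℝ := q ^ (n + 1) with hxdef
  have en : q ^ n = x * q⁻¹ := by
    rw [hxdef, zpow_add_one₀ hne]; field_simp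
  have en2 : q ^ (n + 2) = x * q := by
    rw [hxdef, show n + 2 = (n + 1) + 1 by ring, zpow_add_one₀ hne]
  have h2 : qnum q 2 = q + q⁻¹ := by
    unfold qnum
    rw [zpow_neg, show q ^ (2:ℤ) = q * q by
      rw [show (2:ℤ) = 1 + 1 by norm_num, zpow_add_one₀ hne, zpow_one]]
    rw [div_eq_iff hlamne]
    field_simp
    ring
  have h2pos : 0 < qnum q 2 := by rw [h2]; positivity
  have h2ne : qnum q 2 ≠ 0 := ne_of_gt h2pos
  have hbr1 : qbr q (n + 1) = x + x⁻¹ := by unfold qbr; rw [zpow_neg]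
  have hbr2 : qbr q (n + 2) = x * q + (x * q)⁻¹ := by unfold qbr; rw [zpow_neg, en2]
  have hbr0 : qbr q n = x * q⁻¹ + (x * q⁻¹)⁻¹ := by unfold qbr; rw [zpow_neg, en]
  have hnum1 : qnum q (n + 1) = (x - x⁻¹) / (q - q⁻¹) := by unfold qnum; rw [zpow_neg]
  have hprod : s * (q - q⁻¹) * qnum q (n + 1) = s * (x - x⁻¹) := by
    rw [hnum1, mul_assoc, mul_div_cancel₀ _ hlamne]
  have key : (s / qnum q 2 * qbr q (n + 1)) ^ 2 - (2 / qnum q 2) ^ 2 * s ^ 2 =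
      (s * (q - q⁻¹) * qnum q (n + 1) / qnum q 2) ^ 2 := by
    rw [hbr1, hprod, h2]
    field_simp
    ring
  have hx : 0 ≤ s * (q - q⁻¹) * qnum q (n + 1) / qnum q 2 := by
    have hnum : 0 ≤ qnum q (n + 1) := by
      rw [hnum1]
      apply div_nonneg _ hlam.le
      have : x⁻¹ ≤ 1 := inv_le_one_of_one_le₀ hx1
      linarith
    positivity
  have hsqrt : Real.sqrt ((s / qnum q 2 * qbr q (n + 1)) ^ 2 - (2 / qnum q 2) ^ 2 * s ^ 2) =
      s * (q - q⁻¹) * qnum q (n + 1) / qnum q 2 := by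
    rw [key, Real.sqrt_sq hx]
  refine ⟨key, by rw [key]; positivity, ?_, ?_⟩
  · rw [hsqrt, hbr1, hbr2, hprod, h2]
    field_simp
    ring
  · rw [hsqrt, hbr1, hbr0, hprod, h2]
    field_simp
    ring
end

section
/- For every real number q > 1 and all integers n and j, one has {n+1}·{n−1}·{j+1}^2 − λ^4·[j]·[j+2]·[n]^2 = [2]^2·{n−j−1}·{n+j+1}. (This is the factorization underlying the closed form of ρ in the space-like region.) -/
theorem spacelike_factorization (q : ℝ) (hq : 1 < q) (n j : ℤ) :
    qbr q (n + 1) * qbr q (n - 1) * qbr q (j + 1) ^ 2 -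
        (q - q⁻¹) ^ 4 * qnum q j * qnum q (j + 2) * qnum q n ^ 2 =
      qnum q 2 ^ 2 * qbr q (n - j - 1) * qbr q (n + j + 1) := by
  have hq0 : q ≠ 0 := by positivity
  have hl : q - q⁻¹ ≠ 0 := by
    have : q⁻¹ < 1 := by rw [inv_lt_one_iff₀]; right; exact hq
    nlinarith
  have hnum : ∀ a : ℤ, (q - q⁻¹) * qnum q a = q ^ a - q ^ (-a) := by
    intro a; rw [qnum, mul_div_cancel₀ _ hl]
  have e1 : (q - q⁻¹) ^ 4 * qnum q j * qnum q (j + 2) * qnum q n ^ 2 =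
      (q ^ j - q ^ (-j)) * (q ^ (j + 2) - q ^ (-(j + 2))) * (q ^ n - q ^ (-n)) ^ 2 := by
    rw [← hnum j, ← hnum (j + 2), ← hnum n]; ring
  have e2 : qnum q 2 = q + q⁻¹ := by
    rw [qnum, div_eq_iff hl]
    have h2 : q ^ (2 : ℤ) = q * q := by norm_num [zpow_two, sq]
    have h2' : q ^ (-2 : ℤ) = (q * q)⁻¹ := by
      rw [← h2, zpow_neg]
    rw [h2, h2']
    field_simp
    ring
  rw [e1, e2]
  have ha : q ^ n ≠ 0 := zpow_ne_zero _ hq0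
  have hb : q ^ j ≠ 0 := zpow_ne_zero _ hq0
  simp only [qbr, zpow_add₀ hq0, zpow_sub₀ hq0, zpow_neg, zpow_one, neg_add, neg_sub]
  generalize q ^ n = a at ha ⊢
  generalize q ^ j = b at hb ⊢
  have h2 : q ^ (2 : ℤ) = q * q := by norm_num [zpow_two, sq]
  rw [h2]
  field_simp
  ring
end

section
/- Let q > 1 and s ≠ 0 be real, n ≥ 0 and j ≥ 0 integers, and set t_n = (s/[2])·{n+1} and r_n^2 = (s^2 λ^2/[2]^2)·[n+2]·[n]. Then the quantity ρ_n(j+1) := (1/(q^2 [2]))·(−r_n^2 + [j][j+2] λ^2 t_n^2/{j+1}^2) has the closed factorized form ρ_n(j+1) = −(s^2 λ^2/(q^2 [2]))·[n−j]·[n+j+2]/{j+1}^2. (Closed form of ρ for the time-like region of the spectrum.) -/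
set_option maxHeartbeats 4000000 in
theorem rho_timelike_closed_form (q s : ℝ) (hq : 1 < q) (hs : s ≠ 0)
    (n j : ℤ) (hn : 0 ≤ n) (hj : 0 ≤ j) :
    1 / (q ^ 2 * qnum q 2) *
        (-(s ^ 2 * (q - q⁻¹) ^ 2 / qnum q 2 ^ 2 * qnum q (n + 2) * qnum q n) +
          qnum q j * qnum q (j + 2) * (q - q⁻¹) ^ 2 *
              (s / qnum q 2 * qbr q (n + 1)) ^ 2 / qbr q (j + 1) ^ 2) =
      -(s ^ 2 * (q - q⁻¹) ^ 2 / (q ^ 2 * qnum q 2)) *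
        (qnum q (n - j) * qnum q (n + j + 2) / qbr q (j + 1) ^ 2) := by
  have hq0 : (0:ℝ) < q := lt_trans one_pos hq
  have hqne : q ≠ 0 := ne_of_gt hq0
  set a : ℝ := q ^ n with ha
  set b : ℝ := q ^ j with hb
  have ha0 : 0 < a := zpow_pos hq0 n
  have hb0 : 0 < b := zpow_pos hq0 j
  have hane : a ≠ 0 := ne_of_gt ha0
  have hbne : b ≠ 0 := ne_of_gt hb0
  have hq21 : q ^ 2 - 1 ≠ 0 := by nlinarith
  have hq2p : (0:ℝ) < q ^ 2 + 1 := by positivity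
  have hq2pne : q ^ 2 + 1 ≠ 0 := ne_of_gt hq2p
  have haq : a ^ 2 * q ^ 2 + 1 ≠ 0 := by positivity
  have hbq : b ^ 2 * q ^ 2 + 1 ≠ 0 := by positivity
  have hlamv : q - q⁻¹ = (q ^ 2 - 1) / q := by field_simp
  have e2 : q ^ (2:ℤ) = q ^ 2 := by norm_cast
  have em2 : q ^ (-2:ℤ) = (q ^ 2)⁻¹ := by rw [zpow_neg]; norm_cast
  have en : q ^ (-n) = a⁻¹ := by rw [zpow_neg]
  have ej : q ^ (-j) = b⁻¹ := by rw [zpow_neg]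
  have en2 : q ^ (n + 2) = a * q ^ 2 := by rw [zpow_add₀ hqne, e2]
  have emn2 : q ^ (-(n + 2)) = (a * q ^ 2)⁻¹ := by rw [zpow_neg, en2]
  have ej2 : q ^ (j + 2) = b * q ^ 2 := by rw [zpow_add₀ hqne, e2]
  have emj2 : q ^ (-(j + 2)) = (b * q ^ 2)⁻¹ := by rw [zpow_neg, ej2]
  have en1 : q ^ (n + 1) = a * q := by rw [zpow_add₀ hqne, zpow_one]
  have emn1 : q ^ (-(n + 1)) = (a * q)⁻¹ := by rw [zpow_neg, en1]
  have ej1 : q ^ (j + 1) = b * q := by rw [zpow_add₀ hqne, zpow_one]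
  have emj1 : q ^ (-(j + 1)) = (b * q)⁻¹ := by rw [zpow_neg, ej1]
  have enj : q ^ (n - j) = a * b⁻¹ := by rw [zpow_sub₀ hqne]; rfl
  have emnj : q ^ (-(n - j)) = (a * b⁻¹)⁻¹ := by rw [zpow_neg, enj]
  have enj2 : q ^ (n + j + 2) = a * b * q ^ 2 := by
    rw [zpow_add₀ hqne, zpow_add₀ hqne, e2]
  have emnj2 : q ^ (-(n + j + 2)) = (a * b * q ^ 2)⁻¹ := by rw [zpow_neg, enj2]
  have hq2v : qnum q 2 = (q ^ 2 + 1) / q := by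
    unfold qnum; rw [e2, em2, hlamv]; field_simp; ring
  have hbrn : qbr q (n + 1) = (a ^ 2 * q ^ 2 + 1) / (a * q) := by
    unfold qbr; rw [en1, emn1]; field_simp
  have hbrj : qbr q (j + 1) = (b ^ 2 * q ^ 2 + 1) / (b * q) := by
    unfold qbr; rw [ej1, emj1]; field_simp
  have hnn : qnum q n = (a ^ 2 - 1) * q / (a * (q ^ 2 - 1)) := by
    unfold qnum; rw [en, hlamv]; field_simp; rw [ha]; ring
  have hnj : qnum q j = (b ^ 2 - 1) * q / (b * (q ^ 2 - 1)) := by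
    unfold qnum; rw [ej, hlamv]; field_simp; rw [hb]; ring
  have hnn2 : qnum q (n + 2) = (a ^ 2 * q ^ 4 - 1) / (a * q * (q ^ 2 - 1)) := by
    unfold qnum; rw [en2, emn2, hlamv]; field_simp
  have hnj2 : qnum q (j + 2) = (b ^ 2 * q ^ 4 - 1) / (b * q * (q ^ 2 - 1)) := by
    unfold qnum; rw [ej2, emj2, hlamv]; field_simp
  have hnnj : qnum q (n - j) = (a ^ 2 - b ^ 2) * q / (a * b * (q ^ 2 - 1)) := by
    unfold qnum; rw [enj, emnj, hlamv]; field_simp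
  have hnnj2 : qnum q (n + j + 2) = (a ^ 2 * b ^ 2 * q ^ 4 - 1) / (a * b * q * (q ^ 2 - 1)) := by
    unfold qnum; rw [enj2, emnj2, hlamv]; field_simp
  rw [hq2v, hbrn, hbrj, hnn, hnj, hnn2, hnj2, hnnj, hnnj2, hlamv]
  field_simp
  ring
end

section
/- Let q > 1 and l > 0 be real, n ∈ ℤ and j ≥ 0 integers, and set t_n = (l λ/[2])·[n] and r_n^2 = (l^2/[2]^2)·{n+1}·{n−1}. Then the quantity ρ_n(j+1) := (1/(q^2 [2]))·(−r_n^2 + [j][j+2] λ^2 t_n^2/{j+1}^2) has the closed factorized form ρ_n(j+1) = −(l^2/(q^2 [2]))·{n−j−1}·{n+j+1}/{j+1}^2. (Closed form of ρ for the space-like region of the spectrum.) -/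
set_option maxHeartbeats 4000000 in
theorem rho_spacelike_closed_form (q l : ℝ) (hq : 1 < q) (hl : 0 < l)
    (n j : ℤ) (hj : 0 ≤ j) :
    1 / (q ^ 2 * qnum q 2) *
        (-(l ^ 2 / qnum q 2 ^ 2 * qbr q (n + 1) * qbr q (n - 1)) +
          qnum q j * qnum q (j + 2) * (q - q⁻¹) ^ 2 *
              (l * (q - q⁻¹) / qnum q 2 * qnum q n) ^ 2 / qbr q (j + 1) ^ 2) =
      -(l ^ 2 / (q ^ 2 * qnum q 2)) *
        (qbr q (n - j - 1) * qbr q (n + j + 1) / qbr q (j + 1) ^ 2) := by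
  have hq1 : (0:ℝ) < q := by linarith
  have hq0 : q ≠ 0 := ne_of_gt hq1
  have hd : q - q⁻¹ ≠ 0 := by
    have h1 : q⁻¹ < 1 := by rw [inv_lt_one_iff₀]; right; exact hq
    have : q⁻¹ < q := lt_trans h1 hq
    linarith
  unfold qnum qbr
  simp only [zpow_add₀ hq0, zpow_sub₀ hq0, zpow_neg, zpow_one, mul_inv_rev]
  have h2 : (q:ℝ) ^ (2:ℤ) = q ^ (2:ℕ) := by norm_cast
  rw [h2]
  have hapos : (0:ℝ) < q ^ n := zpow_pos hq1 _
  have hbpos : (0:ℝ) < q ^ j := zpow_pos hq1 _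
  set a := (q:ℝ) ^ n with ha
  set b := (q:ℝ) ^ j with hb
  clear_value a b
  clear ha hb hj n j
  have han : a ≠ 0 := ne_of_gt hapos
  have haj : b ≠ 0 := ne_of_gt hbpos
  have hq21 : q ^ 2 - 1 ≠ 0 := by nlinarith
  have hq2p : q ^ 2 + 1 ≠ 0 := by positivity
  have hbb : b ^ 2 * q ^ 2 + 1 ≠ 0 := by positivity
  have h1 : q * q - 1 ≠ 0 := by nlinarith
  have hq2 : 1 < q ^ 2 := by nlinarith
  have h2' : q ^ 2 * q ^ 2 - 1 ≠ 0 := by nlinarith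
  have h4 : q * q * (q * q) - 1 ≠ 0 := by nlinarith
  have h3 : b * q * (q * b) + 1 ≠ 0 := by positivity
  have h5 : a * q * (q * a) + 1 ≠ 0 := by positivity
  field_simp [h1, h2', h3, h4, h5]
  ring_nf
  have h7 : -1 + q ^ 4 ≠ 0 := by nlinarith
  have h8 : -1 + q ^ 4 * 3 - q ^ 8 * 3 + q ^ 12 ≠ 0 := by
    have : -1 + q ^ 4 * 3 - q ^ 8 * 3 + q ^ 12 = (q^4 - 1)^3 := by ring
    rw [this]; exact pow_ne_zero _ (by nlinarith)
  field_simp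
  ring
end

section
/- Let q > 1 and s ≠ 0 be real, and let n ≥ 0 and j ≥ 0 be integers. With the time-like spectral values t_n = (s/[2])·{n+1} and r_n^2 = (s^2 λ^2/[2]^2)·[n+2]·[n], the quantity −r_n^2 + [j][j+2] λ^2 t_n^2/{j+1}^2 is ≤ 0 if and only if j ≤ n, and it equals 0 if and only if j = n. (Hence in the time-like region the angular momentum quantum number is restricted to j ≤ n, with ρ_n(n+1) = 0.) -/
private lemma aux_mono {x y : ℝ} (hx : 1 < x) (hy : 1 < y) (hxy : x < y) :
    x + x⁻¹ < y + y⁻¹ := by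
  have hx0 : (0:ℝ) < x := by linarith
  have hy0 : (0:ℝ) < y := by linarith
  have hxy1 : 0 < x * y - 1 := by nlinarith
  rw [← mul_lt_mul_iff_left₀ (mul_pos hx0 hy0)]
  have e1 : (x + x⁻¹) * (x * y) = x * x * y + y := by
    field_simp
  have e2 : (y + y⁻¹) * (x * y) = x * (y * y) + x := by
    field_simp
  rw [e1, e2]
  nlinarith [mul_pos (sub_pos.2 hxy) hxy1]

private lemma aux_iff {x y : ℝ} (hx : 1 < x) (hy : 1 < y) :
    (x + x⁻¹ ≤ y + y⁻¹ ↔ x ≤ y) ∧ (x + x⁻¹ = y + y⁻¹ ↔ x = y) := by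
  constructor
  · constructor
    · intro h
      by_contra hc
      push_neg at hc
      exact absurd h (not_le.2 (aux_mono hy hx hc))
    · intro h
      rcases eq_or_lt_of_le h with rfl | h'
      · exact le_rfl
      · exact le_of_lt (aux_mono hx hy h')
  · constructor
    · intro h
      by_contra hc
      rcases lt_or_gt_of_ne hc with h' | h'
      · exact absurd h (ne_of_lt (aux_mono hx hy h'))
      · exact absurd h.symm (ne_of_lt (aux_mono hy hx h'))
    · rintro rfl; rfl

private lemma keyalg (s c u v : ℝ) (hc : c ≠ 0) (hv : v ≠ 0) :
    -(s ^ 2 / c ^ 2 * (u ^ 2 - c ^ 2)) + (v ^ 2 - c ^ 2) * (s ^ 2 * u ^ 2) / (c ^ 2 * v ^ 2)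
      = s ^ 2 * (v ^ 2 - u ^ 2) / v ^ 2 := by
  field_simp
  ring

private lemma lemI (q : ℝ) (hq : 1 < q) (m : ℤ) :
    qnum q m * qnum q (m + 2) * (q - q⁻¹) ^ 2 = qbr q (m + 1) ^ 2 - (q + q⁻¹) ^ 2 := by
  have hq0 : (0:ℝ) < q := by linarith
  have hq0' : q ≠ 0 := ne_of_gt hq0
  have hqinv : q⁻¹ < 1 := by rw [inv_lt_one_iff₀]; right; exact hq
  have hlam : q - q⁻¹ ≠ 0 := by
    intro h; nlinarith
  have ha : q ^ m ≠ 0 := zpow_ne_zero _ hq0'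
  have h2 : q ^ (2:ℤ) = q * q := by
    norm_num [zpow_ofNat, sq]
  have e : ∀ k : ℤ, qnum q k * (q - q⁻¹) = q ^ k - q ^ (-k) := fun k =>
    div_mul_cancel₀ _ hlam
  calc qnum q m * qnum q (m + 2) * (q - q⁻¹) ^ 2
      = (qnum q m * (q - q⁻¹)) * (qnum q (m + 2) * (q - q⁻¹)) := by ring
    _ = (q ^ m - q ^ (-m)) * (q ^ (m + 2) - q ^ (-(m + 2))) := by rw [e, e]
    _ = qbr q (m + 1) ^ 2 - (q + q⁻¹) ^ 2 := by
        simp only [qbr, neg_add, zpow_add₀ hq0', zpow_neg, zpow_one, h2]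
        field_simp
        ring

theorem timelike_angular_momentum_bound (q s : ℝ) (hq : 1 < q) (hs : s ≠ 0)
    (n j : ℤ) (hn : 0 ≤ n) (hj : 0 ≤ j) :
    (-(s ^ 2 * (q - q⁻¹) ^ 2 / qnum q 2 ^ 2 * qnum q (n + 2) * qnum q n) +
          qnum q j * qnum q (j + 2) * (q - q⁻¹) ^ 2 *
            (s / qnum q 2 * qbr q (n + 1)) ^ 2 / qbr q (j + 1) ^ 2 ≤ 0 ↔ j ≤ n) ∧
      (-(s ^ 2 * (q - q⁻¹) ^ 2 / qnum q 2 ^ 2 * qnum q (n + 2) * qnum q n) +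
          qnum q j * qnum q (j + 2) * (q - q⁻¹) ^ 2 *
            (s / qnum q 2 * qbr q (n + 1)) ^ 2 / qbr q (j + 1) ^ 2 = 0 ↔ j = n) := by
  have hq0 : (0:ℝ) < q := by linarith
  have hq0' : q ≠ 0 := ne_of_gt hq0
  have hqinv : q⁻¹ < 1 := by rw [inv_lt_one_iff₀]; right; exact hq
  have hlam : q - q⁻¹ ≠ 0 := by intro h; nlinarith
  have hA1 : 1 < q ^ (j + 1) := one_lt_zpow₀ hq (by omega)
  have hB1 : 1 < q ^ (n + 1) := one_lt_zpow₀ hq (by omega)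
  have hq2 : qnum q 2 = q + q⁻¹ := by
    rw [qnum]
    have h2 : q ^ (2:ℤ) = q * q := by norm_num [zpow_ofNat, sq]
    have h2' : q ^ (-2:ℤ) = (q * q)⁻¹ := by
      rw [show (-2:ℤ) = -(2:ℤ) by ring, zpow_neg, h2]
    rw [h2, h2', div_eq_iff hlam]
    field_simp
    ring
  have hc0 : 0 < q + q⁻¹ := by positivity
  have In := lemI q hq n
  have Ij := lemI q hq j
  -- comparison facts for the brackets, phrased via X = q^(j+1), Y = q^(n+1)
  have hzle : qbr q (j + 1) ≤ qbr q (n + 1) ↔ j ≤ n := by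
    rw [qbr, qbr, zpow_neg, zpow_neg, (aux_iff hA1 hB1).1,
      zpow_le_zpow_iff_right₀ hq]
    omega
  have hzeq : qbr q (j + 1) = qbr q (n + 1) ↔ j = n := by
    rw [qbr, qbr, zpow_neg, zpow_neg, (aux_iff hA1 hB1).2]
    constructor
    · intro h
      have := (zpow_right_injective₀ hq0 (ne_of_gt hq)).eq_iff.1 h
      omega
    · rintro rfl; rfl
  have hv0 : 0 < qbr q (j + 1) := by
    rw [qbr, zpow_neg]; positivity
  have hu0 : 0 < qbr q (n + 1) := by
    rw [qbr, zpow_neg]; positivity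
  -- make the brackets opaque atoms
  rw [hq2]
  set c : ℝ := q + q⁻¹ with hc
  set v : ℝ := qbr q (j + 1) with hv
  set u : ℝ := qbr q (n + 1) with hu
  -- key algebraic identity
  have key : (-(s ^ 2 * (q - q⁻¹) ^ 2 / c ^ 2 * qnum q (n + 2) * qnum q n) +
          qnum q j * qnum q (j + 2) * (q - q⁻¹) ^ 2 * (s / c * u) ^ 2 / v ^ 2)
      = s ^ 2 * (v ^ 2 - u ^ 2) / v ^ 2 := by
    have step : (-(s ^ 2 * (q - q⁻¹) ^ 2 / c ^ 2 * qnum q (n + 2) * qnum q n) +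
          qnum q j * qnum q (j + 2) * (q - q⁻¹) ^ 2 * (s / c * u) ^ 2 / v ^ 2)
        = -(s ^ 2 / c ^ 2 * (qnum q n * qnum q (n + 2) * (q - q⁻¹) ^ 2)) +
          (qnum q j * qnum q (j + 2) * (q - q⁻¹) ^ 2) *
            (s ^ 2 * u ^ 2) / (c ^ 2 * v ^ 2) := by
      clear_value c v u
      ring
    rw [step, In, Ij]
    clear_value c v u
    exact keyalg s c u v (ne_of_gt hc0) (ne_of_gt hv0)
  rw [key]
  clear_value c v u
  clear In Ij hc hv hu
  have hs2 : (0:ℝ) < s ^ 2 := by positivity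
  have hv2 : (0:ℝ) < v ^ 2 := by positivity
  constructor
  · rw [← hzle]
    constructor
    · intro h
      have h' : s ^ 2 * (v ^ 2 - u ^ 2) ≤ 0 := by
        by_contra hcon
        push_neg at hcon
        have := div_pos hcon hv2
        linarith
      have hsq : v ^ 2 ≤ u ^ 2 := by nlinarith
      nlinarith
    · intro h
      have : v ^ 2 - u ^ 2 ≤ 0 := by nlinarith
      exact div_nonpos_of_nonpos_of_nonneg (by nlinarith) hv2.le
  · rw [← hzeq]
    rw [div_eq_zero_iff]
    constructor
    · rintro (h | h)
      · have h' : v ^ 2 - u ^ 2 = 0 := by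
          rcases mul_eq_zero.1 h with h'' | h''
          · exact absurd h'' (by positivity)
          · exact h''
        nlinarith
      · exact absurd h (by positivity)
    · intro h
      left
      rw [h]
      ring
end

section
/- Let q > 1 and l > 0 be real, and let n ∈ ℤ and j ≥ 0 be integers. With the space-like spectral values t_n = (l λ/[2])·[n] and r_n^2 = (l^2/[2]^2)·{n+1}·{n−1}, the quantity −r_n^2 + [j][j+2] λ^2 t_n^2/{j+1}^2 is strictly negative for every j ≥ 0. (Hence in the space-like region there is no upper bound on the angular momentum quantum number j.) -/
set_option maxHeartbeats 2000000

theorem spacelike_no_angular_momentum_bound (q l : ℝ) (hq : 1 < q) (hl : 0 < l)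
    (n j : ℤ) (hj : 0 ≤ j) :
    -(l ^ 2 / qnum q 2 ^ 2 * qbr q (n + 1) * qbr q (n - 1)) +
        qnum q j * qnum q (j + 2) * (q - q⁻¹) ^ 2 *
          (l * (q - q⁻¹) / qnum q 2 * qnum q n) ^ 2 / qbr q (j + 1) ^ 2 < 0 := by
  have hq0 : (0:ℝ) < q := lt_trans one_pos hq
  have hqne : q ≠ 0 := ne_of_gt hq0
  have hinv : q⁻¹ < q := lt_trans (inv_lt_one_of_one_lt₀ hq) hq
  have hlam : (0:ℝ) < q - q⁻¹ := sub_pos.mpr hinv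
  have hlamne : q - q⁻¹ ≠ 0 := ne_of_gt hlam
  have hsq1 : (q:ℝ) ^ 2 - 1 ≠ 0 := by nlinarith
  have hsq2 : (q:ℝ) ^ 2 + 1 ≠ 0 := by positivity
  have hb : (0:ℝ) < q + q⁻¹ := by positivity
  have hbne : q + q⁻¹ ≠ 0 := ne_of_gt hb
  obtain ⟨X, hX⟩ : ∃ X : ℝ, q ^ n = X := ⟨_, rfl⟩
  obtain ⟨Y, hY⟩ : ∃ Y : ℝ, q ^ j = Y := ⟨_, rfl⟩
  have hXpos : 0 < X := hX ▸ zpow_pos hq0 n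
  have hYpos : 0 < Y := hY ▸ zpow_pos hq0 j
  have hXne : X ≠ 0 := ne_of_gt hXpos
  have hYne : Y ≠ 0 := ne_of_gt hYpos
  have e11 : (q:ℝ) ^ (2:ℤ) = q * q := zpow_two q
  have e12 : (q:ℝ) ^ (-2:ℤ) = q⁻¹ * q⁻¹ := by rw [zpow_neg, e11, mul_inv]
  have e1 : q ^ (n+1) = X * q := by rw [zpow_add₀ hqne, zpow_one, hX]
  have e2 : q ^ (-(n+1)) = X⁻¹ * q⁻¹ := by
    rw [neg_add, zpow_add₀ hqne, zpow_neg, zpow_neg, zpow_one, hX]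
  have e3 : q ^ (n-1) = X * q⁻¹ := by
    rw [zpow_sub₀ hqne, zpow_one, div_eq_mul_inv, hX]
  have e4 : q ^ (-(n-1)) = X⁻¹ * q := by
    rw [neg_sub, zpow_sub₀ hqne, zpow_one, div_eq_mul_inv, hX, mul_comm]
  have e5 : q ^ (-n) = X⁻¹ := by rw [zpow_neg, hX]
  have e6 : q ^ (-j) = Y⁻¹ := by rw [zpow_neg, hY]
  have e7 : q ^ (j+2) = Y * (q * q) := by rw [zpow_add₀ hqne, e11, hY]
  have e8 : q ^ (-(j+2)) = Y⁻¹ * (q⁻¹ * q⁻¹) := by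
    rw [neg_add, zpow_add₀ hqne, zpow_neg, zpow_neg, e11, mul_inv, hY]
  have e9 : q ^ (j+1) = Y * q := by rw [zpow_add₀ hqne, zpow_one, hY]
  have e10 : q ^ (-(j+1)) = Y⁻¹ * q⁻¹ := by
    rw [neg_add, zpow_add₀ hqne, zpow_neg, zpow_neg, zpow_one, hY]
  have hc : 0 < Y * q + Y⁻¹ * q⁻¹ := by positivity
  have hcne : Y * q + Y⁻¹ * q⁻¹ ≠ 0 := ne_of_gt hc
  have key : -(l ^ 2 / qnum q 2 ^ 2 * qbr q (n + 1) * qbr q (n - 1)) +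
        qnum q j * qnum q (j + 2) * (q - q⁻¹) ^ 2 *
          (l * (q - q⁻¹) / qnum q 2 * qnum q n) ^ 2 / qbr q (j + 1) ^ 2
      = -(l ^ 2 * (1 + ((X - X⁻¹) / (Y * q + Y⁻¹ * q⁻¹)) ^ 2)) := by
    unfold qnum qbr
    rw [e1, e2, e3, e4, e5, e6, e7, e8, e9, e10, e11, e12, hX, hY]
    have h2 : (q * q - q⁻¹ * q⁻¹) / (q - q⁻¹) = q + q⁻¹ := by
      rw [div_eq_iff hlamne]; field_simp; ring
    rw [h2]
    have hYprod : (Y - Y⁻¹) / (q - q⁻¹) * ((Y * (q * q) - Y⁻¹ * (q⁻¹ * q⁻¹)) / (q - q⁻¹)) *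
        (q - q⁻¹) ^ 2 = (Y * q + Y⁻¹ * q⁻¹) ^ 2 - (q + q⁻¹) ^ 2 := by
      rw [div_mul_div_comm, sq, div_mul_cancel₀ _ (mul_ne_zero hlamne hlamne)]
      field_simp
      ring
    rw [hYprod]
    generalize hcg : Y * q + Y⁻¹ * q⁻¹ = c at hc ⊢
    have hcne' : c ≠ 0 := ne_of_gt hc
    have hT : l * (q - q⁻¹) / (q + q⁻¹) * ((X - X⁻¹) / (q - q⁻¹))
        = l * (X - X⁻¹) / (q + q⁻¹) := by
      rw [div_mul_div_comm,
        show l * (q - q⁻¹) * (X - X⁻¹) = (q - q⁻¹) * (l * (X - X⁻¹)) from by ring,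
        show (q + q⁻¹) * (q - q⁻¹) = (q - q⁻¹) * (q + q⁻¹) from by ring,
        mul_div_mul_left _ _ hlamne]
    rw [hT]
    field_simp
    ring
  rw [key]
  have : 0 < l ^ 2 * (1 + ((X - X⁻¹) / (Y * q + Y⁻¹ * q⁻¹)) ^ 2) := by positivity
  linarith
end

section
/- Let q > 1 and s > 0 be real, and for n ≥ 0 set t_n = (s/[2])·{n+1} and r_n = (s λ/[2])·√([n+2]·[n]). Then t_n − r_n > 0 for all n and lim_{n→∞} (t_n − r_n) = 0. (The time-like spectral lattice accumulates on the light cone t = r.) -/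
section aux
variable {q : ℝ}

lemma lam_pos (hq : 1 < q) : 0 < q - q⁻¹ := by
  have hq0 : (0:ℝ) < q := lt_trans one_pos hq
  have h1 : q⁻¹ < 1 := inv_lt_one_of_one_lt₀ hq
  linarith

lemma qnum_two (hq : 1 < q) : qnum q 2 = q + q⁻¹ := by
  have hq0 : (0:ℝ) < q := lt_trans one_pos hq
  have hne : q ≠ 0 := ne_of_gt hq0
  have hl := lam_pos hq
  unfold qnum
  rw [div_eq_iff hl.ne']
  rw [show ((2:ℤ)) = ((2:ℕ):ℤ) by norm_num, zpow_neg, zpow_natCast]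
  field_simp
  ring

lemma key (hq : 1 < q) (n : ℕ) :
    (q - q⁻¹)^2 * (qnum q ((n:ℤ)+2) * qnum q (n:ℤ)) = qbr q ((n:ℤ)+1)^2 - (q+q⁻¹)^2 := by
  have hq0 : (0:ℝ) < q := lt_trans one_pos hq
  have hne : q ≠ 0 := ne_of_gt hq0
  have hl := (lam_pos hq).ne'
  unfold qnum qbr
  have hx : q ^ ((n:ℤ)) = q ^ n := zpow_natCast q n
  have hxn : (q:ℝ) ^ n ≠ 0 := pow_ne_zero _ hne
  rw [div_mul_div_comm, ← sq, ← mul_div_assoc,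
      mul_div_cancel_left₀ _ (pow_ne_zero 2 hl)]
  rw [show ((n:ℤ)+2) = (n:ℤ)+(2:ℕ) by push_cast; ring,
      show ((n:ℤ)+1) = (n:ℤ)+(1:ℕ) by push_cast; ring]
  rw [neg_add, neg_add]
  rw [zpow_add₀ hne, zpow_add₀ hne, zpow_add₀ hne, zpow_add₀ hne]
  rw [zpow_neg, zpow_neg, hx, zpow_natCast, zpow_natCast]
  simp only [zpow_neg, zpow_natCast]
  field_simp
  ring

lemma qnum_nonneg (hq : 1 < q) {a : ℤ} (ha : 0 ≤ a) : 0 ≤ qnum q a := by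
  have hq0 : (0:ℝ) < q := lt_trans one_pos hq
  have hl := lam_pos hq
  apply div_nonneg _ hl.le
  have : q ^ (-a) ≤ q ^ a := zpow_le_zpow_right₀ hq.le (by linarith)
  linarith

end aux

theorem timelike_lattice_accumulates_on_lightcone (q s : ℝ) (hq : 1 < q) (hs : 0 < s) :
    (∀ n : ℕ,
        0 < s / qnum q 2 * qbr q ((n : ℤ) + 1) -
            s * (q - q⁻¹) / qnum q 2 * Real.sqrt (qnum q ((n : ℤ) + 2) * qnum q (n : ℤ))) ∧
      Filter.Tendsto
        (fun n : ℕ =>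
          s / qnum q 2 * qbr q ((n : ℤ) + 1) -
            s * (q - q⁻¹) / qnum q 2 * Real.sqrt (qnum q ((n : ℤ) + 2) * qnum q (n : ℤ)))
        Filter.atTop (nhds 0) := by
  have hq0 : (0:ℝ) < q := lt_trans one_pos hq
  have hne : q ≠ 0 := ne_of_gt hq0
  have hl : 0 < q - q⁻¹ := lam_pos hq
  have hc : 0 < q + q⁻¹ := by positivity
  rw [qnum_two hq]
  set c := q + q⁻¹ with hcdef
  set T : ℕ → ℝ := fun n => qbr q ((n:ℤ)+1) with hTdef
  -- basic facts about T
  have hTge : ∀ n : ℕ, q ^ n ≤ T n := by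
    intro n
    have h1 : (q:ℝ) ^ n ≤ q ^ ((n:ℤ)+1) := by
      rw [← zpow_natCast q n]
      exact zpow_le_zpow_right₀ hq.le (by linarith)
    have h2 : 0 < q ^ (-((n:ℤ)+1)) := zpow_pos hq0 _
    simp only [hTdef, qbr]
    linarith
  have hTpos : ∀ n : ℕ, 0 < T n := fun n =>
    lt_of_lt_of_le (pow_pos hq0 n) (hTge n)
  -- rewrite the sqrt term
  have hP : ∀ n : ℕ, 0 ≤ qnum q ((n:ℤ)+2) * qnum q (n:ℤ) := fun n =>
    mul_nonneg (qnum_nonneg hq (by linarith [Int.ofNat_nonneg n] : (0:ℤ) ≤ (n:ℤ)+2))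
      (qnum_nonneg hq (Int.ofNat_nonneg n))
  have hsq : ∀ n : ℕ, (q - q⁻¹) * Real.sqrt (qnum q ((n:ℤ)+2) * qnum q (n:ℤ))
      = Real.sqrt (T n ^ 2 - c ^ 2) := by
    intro n
    rw [← key hq n]
    rw [Real.sqrt_mul (sq_nonneg _), Real.sqrt_sq hl.le]
  have hTc : ∀ n : ℕ, 0 ≤ T n ^ 2 - c ^ 2 := by
    intro n
    rw [← key hq n]
    exact mul_nonneg (sq_nonneg _) (hP n)
  -- the expression
  have hform : ∀ n : ℕ,
      s / c * T n - s * (q - q⁻¹) / c * Real.sqrt (qnum q ((n:ℤ)+2) * qnum q (n:ℤ))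
      = s / c * (T n - Real.sqrt (T n ^ 2 - c ^ 2)) := by
    intro n
    rw [← hsq n]; ring
  have hglt : ∀ n : ℕ, Real.sqrt (T n ^ 2 - c ^ 2) < T n := by
    intro n
    have : T n ^ 2 - c ^ 2 < T n ^ 2 := by nlinarith [hc]
    calc Real.sqrt (T n ^ 2 - c ^ 2) < Real.sqrt (T n ^ 2) :=
          Real.sqrt_lt_sqrt (hTc n) this
      _ = T n := Real.sqrt_sq (hTpos n).le
  constructor
  · intro n
    rw [hform n]
    have := hglt n
    have hsc : 0 < s / c := div_pos hs hc
    nlinarith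
  · -- limit
    have hub : ∀ n : ℕ, s / c * (T n - Real.sqrt (T n ^ 2 - c ^ 2)) ≤ s * c * (q⁻¹) ^ n := by
      intro n
      set g := Real.sqrt (T n ^ 2 - c ^ 2) with hg
      have hg0 : 0 ≤ g := Real.sqrt_nonneg _
      have hgsq : g ^ 2 = T n ^ 2 - c ^ 2 := Real.sq_sqrt (hTc n)
      have hTg : 0 < T n + g := by linarith [hTpos n]
      have h1 : (T n - g) * (T n + g) = c ^ 2 := by nlinarith
      have h2 : T n - g = c ^ 2 / (T n + g) := by
        field_simp
        nlinarith
      have h3 : c ^ 2 / (T n + g) ≤ c ^ 2 / T n := by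
        apply div_le_div_of_nonneg_left (by positivity) (hTpos n)
        linarith
      have h4 : c ^ 2 / T n ≤ c ^ 2 / q ^ n :=
        div_le_div_of_nonneg_left (by positivity) (pow_pos hq0 n) (hTge n)
      have h5 : s / c * (c ^ 2 / q ^ n) = s * c * (q⁻¹)^n := by
        rw [inv_pow]
        field_simp
      calc s / c * (T n - g) ≤ s / c * (c ^ 2 / q ^ n) := by
            apply mul_le_mul_of_nonneg_left _ (by positivity)
            linarith
        _ = s * c * (q⁻¹)^n := h5
    have hlim : Filter.Tendsto (fun n : ℕ => s * c * (q⁻¹)^n) Filter.atTop (nhds 0) := by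
      have : Filter.Tendsto (fun n : ℕ => (q⁻¹)^n) Filter.atTop (nhds 0) :=
        tendsto_pow_atTop_nhds_zero_of_lt_one (by positivity) (inv_lt_one_of_one_lt₀ hq)
      simpa using this.const_mul (s * c)
    have hzero : Filter.Tendsto (fun _ : ℕ => (0:ℝ)) Filter.atTop (nhds 0) :=
      tendsto_const_nhds
    apply tendsto_of_tendsto_of_tendsto_of_le_of_le hzero hlim
    · intro n
      show (0:ℝ) ≤ s / c * qbr q ((n:ℤ)+1) -
          s * (q - q⁻¹) / c * Real.sqrt (qnum q ((n:ℤ)+2) * qnum q (n:ℤ))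
      rw [hform n]
      have := hglt n
      have hsc : 0 < s / c := div_pos hs hc
      nlinarith
    · intro n
      show s / c * qbr q ((n:ℤ)+1) -
          s * (q - q⁻¹) / c * Real.sqrt (qnum q ((n:ℤ)+2) * qnum q (n:ℤ)) ≤ s * c * (q⁻¹)^n
      rw [hform n]
      exact hub n
end

section
/- Let q > 1 and l > 0 be real, and for n ≥ 0 set t_n = (l λ/[2])·[n] and r_n = (l/[2])·√({n+1}·{n−1}). Then r_n − t_n > 0 for all n and lim_{n→∞} (r_n − t_n) = 0. (The space-like spectral lattice accumulates on the light cone t = r.) -/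
lemma qbr_prod_eq (q : ℝ) (hq : 0 < q) (n : ℕ) :
    qbr q ((n : ℤ) + 1) * qbr q ((n : ℤ) - 1)
      = (q ^ n - (q ^ n)⁻¹) ^ 2 + (q + q⁻¹) ^ 2 := by
  have hqne : q ≠ 0 := hq.ne'
  have hx : (q : ℝ) ^ n ≠ 0 := pow_ne_zero _ hqne
  simp only [qbr, neg_add, neg_sub, zpow_add₀ hqne, zpow_sub₀ hqne, zpow_neg,
    zpow_one, zpow_natCast]
  field_simp
  ring

lemma qnum_nat_eq (q : ℝ) (n : ℕ) :
    qnum q (n : ℤ) = (q ^ n - (q ^ n)⁻¹) / (q - q⁻¹) := by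
  simp [qnum, zpow_natCast, zpow_neg]

theorem spacelike_lattice_accumulates_on_lightcone (q l : ℝ) (hq : 1 < q) (hl : 0 < l) :
    (∀ n : ℕ,
        0 < l / qnum q 2 * Real.sqrt (qbr q ((n : ℤ) + 1) * qbr q ((n : ℤ) - 1)) -
            l * (q - q⁻¹) / qnum q 2 * qnum q (n : ℤ)) ∧
      Filter.Tendsto
        (fun n : ℕ =>
          l / qnum q 2 * Real.sqrt (qbr q ((n : ℤ) + 1) * qbr q ((n : ℤ) - 1)) -
            l * (q - q⁻¹) / qnum q 2 * qnum q (n : ℤ))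
        Filter.atTop (nhds 0) := by
  have hq0 : (0 : ℝ) < q := lt_trans one_pos hq
  have hqne : q ≠ 0 := hq0.ne'
  have hinv : q⁻¹ < 1 := by
    rw [inv_lt_one_iff₀]; right; exact hq
  have hinv0 : 0 < q⁻¹ := inv_pos.mpr hq0
  have hden : 0 < q - q⁻¹ := by linarith
  have hc : 0 < q + q⁻¹ := by linarith
  have h2 : qnum q 2 = q + q⁻¹ := by
    unfold qnum
    rw [show (2 : ℤ) = ((2 : ℕ) : ℤ) by norm_num, zpow_natCast, zpow_neg, zpow_natCast]
    rw [div_eq_iff hden.ne']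
    field_simp
    ring
  set c : ℝ := q + q⁻¹ with hcdef
  -- rewrite the function
  have hfun : ∀ n : ℕ,
      l / qnum q 2 * Real.sqrt (qbr q ((n : ℤ) + 1) * qbr q ((n : ℤ) - 1)) -
          l * (q - q⁻¹) / qnum q 2 * qnum q (n : ℤ)
        = l / c * (Real.sqrt ((q ^ n - (q ^ n)⁻¹) ^ 2 + c ^ 2) - (q ^ n - (q ^ n)⁻¹)) := by
    intro n
    rw [h2, qbr_prod_eq q hq0 n, qnum_nat_eq q n]
    have hcancel : l * (q - q⁻¹) / c * ((q ^ n - (q ^ n)⁻¹) / (q - q⁻¹))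
        = l / c * (q ^ n - (q ^ n)⁻¹) := by
      have h1 : (q - q⁻¹) * ((q ^ n - (q ^ n)⁻¹) / (q - q⁻¹)) = q ^ n - (q ^ n)⁻¹ :=
        mul_div_cancel₀ _ hden.ne'
      calc l * (q - q⁻¹) / c * ((q ^ n - (q ^ n)⁻¹) / (q - q⁻¹))
          = l / c * ((q - q⁻¹) * ((q ^ n - (q ^ n)⁻¹) / (q - q⁻¹))) := by ring
        _ = l / c * (q ^ n - (q ^ n)⁻¹) := by rw [h1]
    rw [hcancel, mul_sub, ← hcdef]
    ring
  have key : ∀ n : ℕ,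
      0 < l / c * (Real.sqrt ((q ^ n - (q ^ n)⁻¹) ^ 2 + c ^ 2) - (q ^ n - (q ^ n)⁻¹)) ∧
      l / c * (Real.sqrt ((q ^ n - (q ^ n)⁻¹) ^ 2 + c ^ 2) - (q ^ n - (q ^ n)⁻¹))
        ≤ l / c * c ^ 2 * (q⁻¹) ^ n := by
    intro n
    set x : ℝ := q ^ n with hxdef
    have hx1 : (1 : ℝ) ≤ x := one_le_pow₀ hq.le
    have hx0 : 0 < x := lt_of_lt_of_le one_pos hx1
    have hb0 : 0 ≤ x - x⁻¹ := by
      have : x⁻¹ ≤ 1 := inv_le_one_of_one_le₀ hx1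
      linarith
    set b : ℝ := x - x⁻¹ with hbdef
    set s : ℝ := Real.sqrt (b ^ 2 + c ^ 2) with hsdef
    have hs0 : 0 ≤ s := Real.sqrt_nonneg _
    have hssq : s ^ 2 = b ^ 2 + c ^ 2 := Real.sq_sqrt (by positivity)
    have hbs : b < s := by
      nlinarith [sq_nonneg (s - b), sq_nonneg c]
    have hsb0 : 0 < s + b := by linarith
    have hsub : s - b = c ^ 2 / (s + b) := by
      rw [eq_div_iff hsb0.ne']
      nlinarith
    have hlc : 0 < l / c := div_pos hl hc
    constructor
    · exact mul_pos hlc (by linarith)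
    · -- s ≥ x
      have hsx : x ≤ s := by
        rw [hsdef]
        apply Real.le_sqrt' hx0 |>.mpr
        simp only [hbdef, hcdef]
        nlinarith [sq_nonneg x⁻¹, sq_nonneg q⁻¹, mul_inv_cancel₀ hx0.ne',
          mul_inv_cancel₀ hqne]
      have hxsb : x ≤ s + b := by linarith
      have hle : s - b ≤ c ^ 2 / x := by
        rw [hsub]
        exact div_le_div_of_nonneg_left (by positivity) hx0 hxsb
      have hxinv : c ^ 2 / x = c ^ 2 * (q⁻¹) ^ n := by
        rw [hxdef, div_eq_mul_inv, ← inv_pow]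
      calc l / c * (s - b) ≤ l / c * (c ^ 2 / x) :=
            mul_le_mul_of_nonneg_left hle hlc.le
        _ = l / c * c ^ 2 * (q⁻¹) ^ n := by rw [hxinv]; ring
  constructor
  · intro n; rw [hfun n]; exact (key n).1
  · rw [show (fun n : ℕ =>
        l / qnum q 2 * Real.sqrt (qbr q ((n : ℤ) + 1) * qbr q ((n : ℤ) - 1)) -
          l * (q - q⁻¹) / qnum q 2 * qnum q (n : ℤ)) = fun n : ℕ =>
        l / c * (Real.sqrt ((q ^ n - (q ^ n)⁻¹) ^ 2 + c ^ 2) - (q ^ n - (q ^ n)⁻¹)) from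
      funext hfun]
    apply squeeze_zero (fun n => ((key n).1).le) (fun n => (key n).2)
    have : Filter.Tendsto (fun n : ℕ => (q⁻¹) ^ n) Filter.atTop (nhds 0) :=
      tendsto_pow_atTop_nhds_zero_of_lt_one hinv0.le hinv
    simpa using this.const_mul (l / c * c ^ 2)
end
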